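/- arXiv:2005.06844 — 4 statements merged into one kernel-verified Lean document; each statement's English description precedes it below -/
import Mathlib

section
/- Let X, Y be real Hilbert spaces, f : X → ℝ and c : X → Y be C² near 0, and p ∈ Y* a continuous linear functional. Define Lagrangians L₁(x) := f(x) + p(c(x)) and L₂(x) := f(Φ(x)) + p(Ψ(c(Φ(x)))), where Φ : U → X and Ψ : V → Y are C² with Φ(0)=0, Φ'(0)=id, Ψ(0)=0, Ψ'(0)=id, and c(0)=0. Then for all v,w ∈ X: L₂''(0)(v,w) − L₁''(0)(v,w) = L₁'(0)(Φ''(0)(v,w)) + p(Ψ''(0)(c'(0)v, c'(0)w)). -/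
/-!
Everything follows from the second-order chain rule `D²(g ∘ h) = D²g (Dh ·, Dh ·) + Dg ∘ D²h`. Since `Φ'(0) = id`,
differentiating `L₂ = (f + p ∘ Ψ ∘ c) ∘ Φ` twice at `0` adds `L₁'(0) (Φ''(0) v w)` to the second
derivative of `f + p ∘ Ψ ∘ c`, whose first derivative at `0` is `L₁'(0)`. Since `Ψ'(0) = id`, the
second derivative of `Ψ ∘ c` at `0` exceeds that of `c` by `Ψ''(0) (c'(0) v) (c'(0) w)`.
-/

open Filter Topology

section SecondDerivative

variable {𝕜 : Type*} [NontriviallyNormedField 𝕜]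
  {E : Type*} [NormedAddCommGroup E] [NormedSpace 𝕜 E]
  {F : Type*} [NormedAddCommGroup F] [NormedSpace 𝕜 F]
  {G : Type*} [NormedAddCommGroup G] [NormedSpace 𝕜 G]

lemma ContDiffAt.differentiableAt_fderiv {f : E → F} {x : E} (hf : ContDiffAt 𝕜 2 f x) :
    DifferentiableAt 𝕜 (fderiv 𝕜 f) x :=
  (hf.fderiv_right (m := 1) (by norm_num)).differentiableAt one_ne_zero

lemma fderiv_fderiv_comp_apply {g : F → G} {h : E → F} {x : E}
    (hg : ContDiffAt 𝕜 2 g (h x)) (hh : ContDiffAt 𝕜 2 h x) (v w : E) :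
    fderiv 𝕜 (fderiv 𝕜 (fun y => g (h y))) x v w =
      fderiv 𝕜 (fderiv 𝕜 g) (h x) (fderiv 𝕜 h x v) (fderiv 𝕜 h x w)
        + fderiv 𝕜 g (h x) (fderiv 𝕜 (fderiv 𝕜 h) x v w) := by
  have hg_near : ∀ᶠ y in 𝓝 x, ContDiffAt 𝕜 2 g (h y) :=
    hh.continuousAt.tendsto.eventually (hg.eventually (by simp))
  have hchain : fderiv 𝕜 (fun y => g (h y)) =ᶠ[𝓝 x]
      fun y => (fderiv 𝕜 g (h y)).comp (fderiv 𝕜 h y) := by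
    filter_upwards [hg_near, hh.eventually (by simp)] with y hgy hhy
    exact fderiv_comp y (hgy.differentiableAt two_ne_zero) (hhy.differentiableAt two_ne_zero)
  have hDg : HasFDerivAt (fun y => fderiv 𝕜 g (h y))
      ((fderiv 𝕜 (fderiv 𝕜 g) (h x)).comp (fderiv 𝕜 h x)) x :=
    hg.differentiableAt_fderiv.hasFDerivAt.comp x (hh.differentiableAt two_ne_zero).hasFDerivAt
  rw [hchain.fderiv_eq, fderiv_clm_comp hDg.differentiableAt hh.differentiableAt_fderiv,
    hDg.fderiv]
  simp only [add_apply, ContinuousLinearMap.coe_comp, Function.comp_apply,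
    ContinuousLinearMap.compL_apply, ContinuousLinearMap.flip_apply]
  abel

lemma fderiv_fderiv_add_apply {f g : E → F} {x : E}
    (hf : ContDiffAt 𝕜 2 f x) (hg : ContDiffAt 𝕜 2 g x) (v w : E) :
    fderiv 𝕜 (fderiv 𝕜 (fun y => f y + g y)) x v w =
      fderiv 𝕜 (fderiv 𝕜 f) x v w + fderiv 𝕜 (fderiv 𝕜 g) x v w := by
  have hsum : fderiv 𝕜 (fun y => f y + g y) =ᶠ[𝓝 x] fun y => fderiv 𝕜 f y + fderiv 𝕜 g y := by
    filter_upwards [hf.eventually (by simp), hg.eventually (by simp)] with y hfy hgy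
    exact fderiv_fun_add (hfy.differentiableAt two_ne_zero) (hgy.differentiableAt two_ne_zero)
  rw [hsum.fderiv_eq, fderiv_fun_add hf.differentiableAt_fderiv hg.differentiableAt_fderiv]
  rfl

lemma fderiv_fderiv_clm_comp_apply (p : F →L[𝕜] G) {h : E → F} {x : E}
    (hh : ContDiffAt 𝕜 2 h x) (v w : E) :
    fderiv 𝕜 (fderiv 𝕜 (fun y => p (h y))) x v w = p (fderiv 𝕜 (fderiv 𝕜 h) x v w) := by
  have hDp : fderiv 𝕜 (⇑p) = fun _ => p := funext fun _ => p.fderiv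
  rw [fderiv_fderiv_comp_apply p.contDiff.contDiffAt hh, hDp, fderiv_const_apply]
  simp

lemma fderiv_comp_eq_of_fderiv_eq_id {g : F → F} {h : E → F} {x : E}
    (hg : DifferentiableAt 𝕜 g (h x)) (hh : DifferentiableAt 𝕜 h x)
    (hg' : fderiv 𝕜 g (h x) = ContinuousLinearMap.id 𝕜 F) :
    fderiv 𝕜 (fun y => g (h y)) x = fderiv 𝕜 h x := by
  rw [← Function.comp_def, fderiv_comp x hg hh, hg', ContinuousLinearMap.id_comp]

lemma fderiv_fderiv_comp_apply_of_fderiv_left_eq_id {g : F → F} {h : E → F} {x : E}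
    (hg : ContDiffAt 𝕜 2 g (h x)) (hh : ContDiffAt 𝕜 2 h x)
    (hg' : fderiv 𝕜 g (h x) = ContinuousLinearMap.id 𝕜 F) (v w : E) :
    fderiv 𝕜 (fderiv 𝕜 (fun y => g (h y))) x v w =
      fderiv 𝕜 (fderiv 𝕜 g) (h x) (fderiv 𝕜 h x v) (fderiv 𝕜 h x w)
        + fderiv 𝕜 (fderiv 𝕜 h) x v w := by
  rw [fderiv_fderiv_comp_apply hg hh, hg', ContinuousLinearMap.id_apply]

lemma fderiv_fderiv_comp_apply_of_fderiv_right_eq_id {g : E → F} {h : E → E} {x : E}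
    (hg : ContDiffAt 𝕜 2 g (h x)) (hh : ContDiffAt 𝕜 2 h x)
    (hh' : fderiv 𝕜 h x = ContinuousLinearMap.id 𝕜 E) (v w : E) :
    fderiv 𝕜 (fderiv 𝕜 (fun y => g (h y))) x v w =
      fderiv 𝕜 (fderiv 𝕜 g) (h x) v w + fderiv 𝕜 g (h x) (fderiv 𝕜 (fderiv 𝕜 h) x v w) := by
  rw [fderiv_fderiv_comp_apply hg hh, hh', ContinuousLinearMap.id_apply,
    ContinuousLinearMap.id_apply]

end SecondDerivative

section Lagrangian

variable {𝕜 : Type*} [NontriviallyNormedField 𝕜]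
  {E : Type*} [NormedAddCommGroup E] [NormedSpace 𝕜 E]
  {F : Type*} [NormedAddCommGroup F] [NormedSpace 𝕜 F]

lemma fderiv_add_clm_comp {f : E → 𝕜} {c : E → F} (p : F →L[𝕜] 𝕜) {x : E}
    (hf : DifferentiableAt 𝕜 f x) (hc : DifferentiableAt 𝕜 c x) :
    fderiv 𝕜 (fun y => f y + p (c y)) x = fderiv 𝕜 f x + p.comp (fderiv 𝕜 c x) := by
  rw [fderiv_fun_add (g := fun y => p (c y)) hf (p.differentiableAt.comp x hc), ← Function.comp_def,
    fderiv_comp x p.differentiableAt hc, p.fderiv]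

lemma fderiv_fderiv_add_clm_comp_apply {f : E → 𝕜} {c : E → F} (p : F →L[𝕜] 𝕜) {x : E}
    (hf : ContDiffAt 𝕜 2 f x) (hc : ContDiffAt 𝕜 2 c x) (v w : E) :
    fderiv 𝕜 (fderiv 𝕜 (fun y => f y + p (c y))) x v w =
      fderiv 𝕜 (fderiv 𝕜 f) x v w + p (fderiv 𝕜 (fderiv 𝕜 c) x v w) := by
  rw [fderiv_fderiv_add_apply (g := fun y => p (c y)) hf (p.contDiff.contDiffAt.comp x hc),
    fderiv_fderiv_clm_comp_apply p hc]

end Lagrangian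

theorem stmt3_general
    {X : Type*} [NormedAddCommGroup X] [InnerProductSpace ℝ X]
    {Y : Type*} [NormedAddCommGroup Y] [InnerProductSpace ℝ Y]
    (Φ : X → X) (Ψ : Y → Y) (f : X → ℝ) (c : X → Y) (p : Y →L[ℝ] ℝ)
    (hΦ : ContDiffAt ℝ 2 Φ 0) (hΦ0 : Φ 0 = 0)
    (hΦ' : fderiv ℝ Φ 0 = ContinuousLinearMap.id ℝ X)
    (hΨ : ContDiffAt ℝ 2 Ψ 0)
    (hΨ' : fderiv ℝ Ψ 0 = ContinuousLinearMap.id ℝ Y)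
    (hf : ContDiffAt ℝ 2 f 0)
    (hc : ContDiffAt ℝ 2 c 0) (hc0 : c 0 = 0)
    (L₁ L₂ : X → ℝ)
    (hL₁ : L₁ = fun x => f x + p (c x))
    (hL₂ : L₂ = fun x => f (Φ x) + p (Ψ (c (Φ x)))) :
    ∀ v w : X,
      fderiv ℝ (fderiv ℝ L₂) 0 v w - fderiv ℝ (fderiv ℝ L₁) 0 v w =
        fderiv ℝ L₁ 0 (fderiv ℝ (fderiv ℝ Φ) 0 v w) +
          p (fderiv ℝ (fderiv ℝ Ψ) 0 (fderiv ℝ c 0 v) (fderiv ℝ c 0 w)) := by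
  intro v w
  subst hL₁ hL₂
  rw [← hc0] at hΨ hΨ'
  have hΨc : ContDiffAt ℝ 2 (fun x => Ψ (c x)) 0 := hΨ.comp 0 hc
  have hF : ContDiffAt ℝ 2 (fun x => f x + p (Ψ (c x))) (Φ 0) := by
    rw [hΦ0]; exact hf.add (p.contDiff.contDiffAt.comp 0 hΨc)
  have hDF : fderiv ℝ (fun x => f x + p (Ψ (c x))) 0 = fderiv ℝ (fun x => f x + p (c x)) 0 := by
    rw [fderiv_add_clm_comp p (hf.differentiableAt two_ne_zero) (hΨc.differentiableAt two_ne_zero),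
      fderiv_add_clm_comp p (hf.differentiableAt two_ne_zero) (hc.differentiableAt two_ne_zero),
      fderiv_comp_eq_of_fderiv_eq_id (hΨ.differentiableAt two_ne_zero)
        (hc.differentiableAt two_ne_zero) hΨ']
  rw [fderiv_fderiv_comp_apply_of_fderiv_right_eq_id hF hΦ hΦ', hΦ0,
    fderiv_fderiv_add_clm_comp_apply p hf hΨc, fderiv_fderiv_add_clm_comp_apply p hf hc,
    fderiv_fderiv_comp_apply_of_fderiv_left_eq_id hΨ hc hΨ', hDF, hc0, map_add]
  ring

/-- Change of the second derivative of the Lagrangian under C² transition maps of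
retractions and stratifications. -/
theorem stmt3
    {X : Type*} [NormedAddCommGroup X] [InnerProductSpace ℝ X] [CompleteSpace X]
    {Y : Type*} [NormedAddCommGroup Y] [InnerProductSpace ℝ Y] [CompleteSpace Y]
    (Φ : X → X) (Ψ : Y → Y) (f : X → ℝ) (c : X → Y) (p : Y →L[ℝ] ℝ)
    (hΦ : ContDiffAt ℝ 2 Φ 0) (hΦ0 : Φ 0 = 0)
    (hΦ' : fderiv ℝ Φ 0 = ContinuousLinearMap.id ℝ X)
    (hΨ : ContDiffAt ℝ 2 Ψ 0) (hΨ0 : Ψ 0 = 0)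
    (hΨ' : fderiv ℝ Ψ 0 = ContinuousLinearMap.id ℝ Y)
    (hf : ContDiffAt ℝ 2 f 0)
    (hc : ContDiffAt ℝ 2 c 0) (hc0 : c 0 = 0)
    (L₁ L₂ : X → ℝ)
    (hL₁ : L₁ = fun x => f x + p (c x))
    (hL₂ : L₂ = fun x => f (Φ x) + p (Ψ (c (Φ x)))) :
    ∀ v w : X,
      fderiv ℝ (fderiv ℝ L₂) 0 v w - fderiv ℝ (fderiv ℝ L₁) 0 v w =
        fderiv ℝ L₁ 0 (fderiv ℝ (fderiv ℝ Φ) 0 v w) +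
          p (fderiv ℝ (fderiv ℝ Ψ) 0 (fderiv ℝ c 0 v) (fderiv ℝ c 0 w)) :=
  stmt3_general Φ Ψ f c p hΦ hΦ0 hΦ' hΨ hΨ' hf hc hc0 L₁ L₂ hL₁ hL₂
end

section
/- Let X, Y be real Hilbert spaces, A : X → Y a surjective bounded linear operator, and ℓ ∈ X* a continuous linear functional. Define p ∈ Y* by p := −ℓ ∘ A⁻, where A⁻ is the minimum-norm right inverse of A (with range (ker A)^⊥). Then the functional ℓ + p ∘ A vanishes on (ker A)^⊥, and consequently ‖ℓ + p∘A‖_{X*} ≤ ‖ℓ + q∘A‖_{X*} for every q ∈ Y*; that is, p minimizes the dual norm of the Lagrangian gradient among all multipliers. -/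
/-!
`P x := x - B (A x)` is the orthogonal projection onto `ker A`: it lands in `ker A`, and it
kills `(ker A)ᗮ` because `B ∘ A` is the identity there. Hence `ℓ + p ∘ A = ℓ ∘ P`, which
vanishes on `(ker A)ᗮ`; and since `q ∘ A` vanishes on `ker A`, also `ℓ ∘ P = (ℓ + q ∘ A) ∘ P`
for every `q`, so `‖ℓ + p ∘ A‖ ≤ ‖ℓ + q ∘ A‖ * ‖P‖ ≤ ‖ℓ + q ∘ A‖`.
-/

theorem norm_le_norm_add_of_inner_eq_zero {E : Type*} [NormedAddCommGroup E]
    [InnerProductSpace ℝ E] {u v : E} (h : inner ℝ u v = 0) : ‖u‖ ≤ ‖u + v‖ := by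
  refine (mul_self_le_mul_self_iff (norm_nonneg _) (norm_nonneg _)).mpr ?_
  rw [norm_add_sq_eq_norm_sq_add_norm_sq_real h]
  exact le_add_of_nonneg_right (mul_self_nonneg _)

section RightInverse

variable {X : Type*} [NormedAddCommGroup X] [InnerProductSpace ℝ X]
  {Y : Type*} [NormedAddCommGroup Y] [NormedSpace ℝ Y]
  {A : X →L[ℝ] Y} {B : Y →L[ℝ] X}

theorem sub_rightInverse_mem_ker (hB : ∀ y, A (B y) = y) (x : X) :
    x - B (A x) ∈ LinearMap.ker (A : X →ₗ[ℝ] Y) := by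
  simp [hB]

theorem rightInverse_apply_of_mem_orthogonal_ker (hB : ∀ y, A (B y) = y)
    (hB_orth : ∀ y, B y ∈ (LinearMap.ker (A : X →ₗ[ℝ] Y))ᗮ) {w : X}
    (hw : w ∈ (LinearMap.ker (A : X →ₗ[ℝ] Y))ᗮ) : B (A w) = w := by
  have h := Submodule.disjoint_def.mp (Submodule.orthogonal_disjoint _) (w - B (A w))
    (sub_rightInverse_mem_ker hB w) (Submodule.sub_mem _ hw (hB_orth (A w)))
  exact (sub_eq_zero.mp h).symm

theorem norm_sub_rightInverse_le (hB : ∀ y, A (B y) = y)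
    (hB_orth : ∀ y, B y ∈ (LinearMap.ker (A : X →ₗ[ℝ] Y))ᗮ) (x : X) :
    ‖x - B (A x)‖ ≤ ‖x‖ := by
  have h : inner ℝ (x - B (A x)) (B (A x)) = 0 :=
    Submodule.inner_right_of_mem_orthogonal (sub_rightInverse_mem_ker hB x) (hB_orth (A x))
  simpa using norm_le_norm_add_of_inner_eq_zero h

end RightInverse

theorem stmt6_general
    {X : Type*} [NormedAddCommGroup X] [InnerProductSpace ℝ X]
    {Y : Type*} [NormedAddCommGroup Y] [InnerProductSpace ℝ Y]
    (A : X →L[ℝ] Y)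
    (B : Y →L[ℝ] X) (hB1 : ∀ y : Y, A (B y) = y)
    (hB2 : ∀ y : Y, B y ∈ (LinearMap.ker (A : X →ₗ[ℝ] Y))ᗮ)
    (ℓ : X →L[ℝ] ℝ) (p : Y →L[ℝ] ℝ) (hp : p = -(ℓ.comp B)) :
    (∀ w ∈ (LinearMap.ker (A : X →ₗ[ℝ] Y))ᗮ, (ℓ + p.comp A) w = 0) ∧
      ∀ q : Y →L[ℝ] ℝ, ‖ℓ + p.comp A‖ ≤ ‖ℓ + q.comp A‖ := by
  have h_apply : ∀ x, (ℓ + p.comp A) x = ℓ (x - B (A x)) := fun x => by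
    simp [hp, sub_eq_add_neg]
  refine ⟨fun w hw => by rw [h_apply, rightInverse_apply_of_mem_orthogonal_ker hB1 hB2 hw,
    sub_self, map_zero], fun q => ?_⟩
  refine ContinuousLinearMap.opNorm_le_bound _ (norm_nonneg _) fun x => ?_
  have h_ker : A (x - B (A x)) = 0 := sub_rightInverse_mem_ker hB1 x
  calc ‖(ℓ + p.comp A) x‖ = ‖(ℓ + q.comp A) (x - B (A x))‖ := by simp [h_apply, h_ker]
    _ ≤ ‖ℓ + q.comp A‖ * ‖x - B (A x)‖ := (ℓ + q.comp A).le_opNorm _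
    _ ≤ ‖ℓ + q.comp A‖ * ‖x‖ := by gcongr; exact norm_sub_rightInverse_le hB1 hB2 x

/-- The Lagrange multiplier p = -ℓ ∘ A⁻ makes ℓ + p∘A vanish on (ker A)^⊥ and
minimizes the dual norm of the Lagrangian gradient among all multipliers. -/
theorem stmt6
    {X : Type*} [NormedAddCommGroup X] [InnerProductSpace ℝ X] [CompleteSpace X]
    {Y : Type*} [NormedAddCommGroup Y] [InnerProductSpace ℝ Y] [CompleteSpace Y]
    (A : X →L[ℝ] Y) (hA : Function.Surjective A)
    (B : Y →L[ℝ] X) (hB1 : ∀ y : Y, A (B y) = y)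
    (hB2 : ∀ y : Y, B y ∈ (LinearMap.ker (A : X →ₗ[ℝ] Y))ᗮ)
    (ℓ : X →L[ℝ] ℝ) (p : Y →L[ℝ] ℝ) (hp : p = -(ℓ.comp B)) :
    (∀ w ∈ (LinearMap.ker (A : X →ₗ[ℝ] Y))ᗮ, (ℓ + p.comp A) w = 0) ∧
      ∀ q : Y →L[ℝ] ℝ, ‖ℓ + p.comp A‖ ≤ ‖ℓ + q.comp A‖ :=
  stmt6_general A B hB1 hB2 ℓ p hp
end

section
/- Let X, Y be real Hilbert spaces, f : X → ℝ and c : X → Y twice continuously Fréchet differentiable near 0, with c(0) = 0 and c'(0) surjective. Suppose p ∈ Y* satisfies f'(0) + p ∘ c'(0) = 0, and there exists α > 0 such that the Lagrangian L(x) = f(x) + p(c(x)) satisfies L''(0)(v,v) ≥ α‖v‖² for all v ∈ ker c'(0). Then 0 is a strict local minimizer of f on the feasible set {x : c(x) = 0}, provided the feasible set near 0 coincides with the image under a C² local diffeomorphism φ (φ(0)=0, φ'(0)=id) of ker c'(0). -/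
/-! Feasible points `x` near `0` satisfy `c'(0) x = o(‖x‖)`, so by the open mapping theorem they
lie within `o(‖x‖)` of `ker c'(0)`; there the ellipticity of `L''(0)` survives with constant `α/2`.
Since `L'(0) = 0` and `L = f` on the feasible set, the second-order Taylor expansion of `L` gives
`f x - f 0 ≥ α/8 ‖x‖²` for feasible `x` near `0`. -/

open Topology

section

variable {E F : Type*} [NormedAddCommGroup E] [NormedSpace ℝ E]
  [NormedAddCommGroup F] [NormedSpace ℝ F]

theorem ContinuousLinearMap.hasFDerivAt_apply_self_sub (B : E →L[ℝ] E →L[ℝ] F)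
    (hB : ∀ v w, B v w = B w v) (x₀ y : E) :
    HasFDerivAt (fun x => B (x - x₀) (x - x₀)) ((2 : ℝ) • B (y - x₀)) y := by
  have h : HasFDerivAt (fun x => x - x₀) (ContinuousLinearMap.id ℝ E) y := hasFDerivAt_sub_const x₀
  convert B.hasFDerivAt_of_bilinear h h using 1
  ext v
  simp [two_smul, hB v]

theorem ContDiffAt.isLittleO_taylor_two {L : E → F} {x₀ : E} (hL : ContDiffAt ℝ 2 L x₀) :
    (fun x => L x - L x₀ - fderiv ℝ L x₀ (x - x₀)
        - (1 / 2 : ℝ) • fderiv ℝ (fderiv ℝ L) x₀ (x - x₀) (x - x₀))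
      =o[𝓝 x₀] fun x => ‖x - x₀‖ ^ 2 := by
  set B := fderiv ℝ (fderiv ℝ L) x₀
  have hB : HasFDerivAt (fderiv ℝ L) B x₀ :=
    ((hL.fderiv_right (m := 1) le_rfl).differentiableAt one_ne_zero).hasFDerivAt
  have hsymm : ∀ v w, B v w = B w v := hL.isSymmSndFDerivAt (by simp)
  obtain ⟨r, hr, hball⟩ := Metric.eventually_nhds_iff_ball.1 (hL.eventually (by simp))
  have hderiv : ∀ y ∈ Metric.ball x₀ r, HasFDerivWithinAt
      (fun x => L x - L x₀ - fderiv ℝ L x₀ (x - x₀) - (1 / 2 : ℝ) • B (x - x₀) (x - x₀))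
      (fderiv ℝ L y - fderiv ℝ L x₀ - B (y - x₀)) (Metric.ball x₀ r) y := by
    intro y hy
    have hLy := ((hball y hy).differentiableAt two_ne_zero).hasFDerivAt
    have hlin := (fderiv ℝ L x₀).hasFDerivAt.comp y (hasFDerivAt_sub_const (x := y) x₀)
    have hquad := (B.hasFDerivAt_apply_self_sub hsymm x₀ y).const_smul (1 / 2 : ℝ)
    refine ((((hLy.sub_const (L x₀)).sub hlin).sub hquad).congr_fderiv ?_).hasFDerivWithinAt
    ext v
    simp [smul_smul]
  have hsmall : (fun y => fderiv ℝ L y - fderiv ℝ L x₀ - B (y - x₀))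
      =o[𝓝[Metric.ball x₀ r] x₀] fun y => ‖y - x₀‖ ^ 1 := by
    simpa using (hB.isLittleO.norm_right).mono nhdsWithin_le_nhds
  have hg := (convex_ball x₀ r).isLittleO_pow_succ (Metric.mem_ball_self hr) hderiv hsmall
  rw [nhdsWithin_eq_nhds.2 (Metric.ball_mem_nhds x₀ hr)] at hg
  simpa using hg

theorem ContDiffAt.eventually_lt_of_coercive {L : E → ℝ} {x₀ : E} {S : Set E} {β : ℝ}
    (hL : ContDiffAt ℝ 2 L x₀) (hL' : fderiv ℝ L x₀ = 0) (hβ : 0 < β)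
    (hS : ∀ᶠ x in 𝓝 x₀, x ∈ S →
      β * ‖x - x₀‖ ^ 2 ≤ fderiv ℝ (fderiv ℝ L) x₀ (x - x₀) (x - x₀)) :
    ∀ᶠ x in 𝓝 x₀, x ∈ S → x ≠ x₀ → L x₀ < L x := by
  filter_upwards [hS, hL.isLittleO_taylor_two.bound (half_pos (half_pos hβ))]
    with x hSx htaylor hxS hx
  have hpos : 0 < ‖x - x₀‖ ^ 2 := by positivity [sub_ne_zero.2 hx]
  simp only [hL', zero_apply, sub_zero, smul_eq_mul, Real.norm_eq_abs,
    norm_pow, abs_norm] at htaylor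
  nlinarith [(abs_le.1 htaylor).1, hSx hxS]

theorem ContinuousLinearMap.exists_pos_coercive_near_of_coercive_on {B : E →L[ℝ] E →L[ℝ] ℝ}
    {K : Submodule ℝ E} {α : ℝ} (hα : 0 < α) (hB : ∀ v ∈ K, α * ‖v‖ ^ 2 ≤ B v v) :
    ∃ η > 0, ∀ x, ∀ k ∈ K, ‖x - k‖ ≤ η * ‖x‖ → α / 2 * ‖x‖ ^ 2 ≤ B x x := by
  set M := ‖B‖
  have hM : 0 ≤ M := norm_nonneg B
  refine ⟨α / (2 * (2 * α + 3 * M)), by positivity, fun x k hk hxk => ?_⟩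
  set η := α / (2 * (2 * α + 3 * M))
  have hη : η * (2 * (2 * α + 3 * M)) = α := div_mul_cancel₀ _ (by positivity)
  have hη0 : 0 ≤ η := by positivity
  have hη1 : η ≤ 1 := by nlinarith
  have hk_lower : (1 - η) * ‖x‖ ≤ ‖k‖ := by linarith [norm_sub_norm_le x k]
  have hk_upper : ‖k‖ ≤ 2 * ‖x‖ := by
    have := norm_le_insert' k x
    rw [norm_sub_rev] at this
    nlinarith [norm_nonneg x]
  have hdiff : |B x x - B k k| ≤ 3 * M * η * ‖x‖ ^ 2 := by
    have hsplit : B x x - B k k = B x (x - k) + B (x - k) k := by simp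
    calc |B x x - B k k| ≤ M * ‖x‖ * ‖x - k‖ + M * ‖x - k‖ * ‖k‖ := by
          rw [hsplit]
          exact (abs_add_le _ _).trans (add_le_add (B.le_opNorm₂ _ _) (B.le_opNorm₂ _ _))
      _ ≤ M * ‖x‖ * (η * ‖x‖) + M * (η * ‖x‖) * (2 * ‖x‖) := by gcongr
      _ = 3 * M * η * ‖x‖ ^ 2 := by ring
  have hkk : α * ((1 - η) * ‖x‖) ^ 2 ≤ B k k :=
    (mul_le_mul_of_nonneg_left (pow_le_pow_left₀ (by nlinarith [norm_nonneg x]) hk_lower 2)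
      hα.le).trans (hB k hk)
  have hηx : η * (2 * α + 3 * M) * ‖x‖ ^ 2 = α / 2 * ‖x‖ ^ 2 := by
    linear_combination ‖x‖ ^ 2 / 2 * hη
  have hsq : 0 ≤ α * η ^ 2 * ‖x‖ ^ 2 := by positivity
  nlinarith [(abs_le.1 hdiff).1]

theorem ContinuousLinearMap.exists_pos_forall_exists_mem_ker_norm_sub_le [CompleteSpace E]
    [CompleteSpace F] {A : E →L[ℝ] F} (hA : Function.Surjective A) :
    ∃ C > 0, ∀ x, ∃ k ∈ LinearMap.ker (A : E →ₗ[ℝ] F), ‖x - k‖ ≤ C * ‖A x‖ := by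
  obtain ⟨C, hC, hpre⟩ := A.exists_preimage_norm_le hA
  refine ⟨C, hC, fun x => ?_⟩
  obtain ⟨z, hz, hzle⟩ := hpre (A x)
  exact ⟨x - z, by simp [hz], by simpa using hzle⟩

theorem HasFDerivAt.eventually_exists_mem_ker_norm_sub_le [CompleteSpace E] [CompleteSpace F]
    {c : E → F} {A : E →L[ℝ] F} {x₀ : E} (hc : HasFDerivAt c A x₀)
    (hA : Function.Surjective A) {η : ℝ} (hη : 0 < η) :
    ∀ᶠ x in 𝓝 x₀, c x = c x₀ →
      ∃ k ∈ LinearMap.ker (A : E →ₗ[ℝ] F), ‖x - x₀ - k‖ ≤ η * ‖x - x₀‖ := by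
  obtain ⟨C, hC, hker⟩ := A.exists_pos_forall_exists_mem_ker_norm_sub_le hA
  filter_upwards [hc.isLittleO.bound (div_pos hη hC)] with x hx hcx
  obtain ⟨k, hk, hxk⟩ := hker (x - x₀)
  refine ⟨k, hk, hxk.trans ?_⟩
  rw [hcx, sub_self, zero_sub, norm_neg] at hx
  calc C * ‖A (x - x₀)‖ ≤ C * (η / C * ‖x - x₀‖) := by gcongr
    _ = η * ‖x - x₀‖ := by field_simp

end

theorem stmt8_general
    {X : Type*} [NormedAddCommGroup X] [InnerProductSpace ℝ X] [CompleteSpace X]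
    {Y : Type*} [NormedAddCommGroup Y] [InnerProductSpace ℝ Y] [CompleteSpace Y]
    (f : X → ℝ) (c : X → Y) (p : Y →L[ℝ] ℝ) (α : ℝ)
    (hf : ContDiffAt ℝ 2 f 0) (hc : ContDiffAt ℝ 2 c 0) (hc0 : c 0 = 0)
    (hsurj : Function.Surjective (fderiv ℝ c 0))
    (hKKT : fderiv ℝ f 0 + p.comp (fderiv ℝ c 0) = 0)
    (hα : 0 < α)
    (hell : ∀ v ∈ LinearMap.ker (fderiv ℝ c 0 : X →ₗ[ℝ] Y),
      α * ‖v‖ ^ 2 ≤ fderiv ℝ (fderiv ℝ (fun x => f x + p (c x))) 0 v v) :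
    ∃ W ∈ 𝓝 (0 : X), ∀ x ∈ W, c x = 0 → x ≠ 0 → f 0 < f x := by
  set L : X → ℝ := fun x => f x + p (c x)
  have hL : ContDiffAt ℝ 2 L 0 := hf.add (p.contDiff.contDiffAt.comp 0 hc)
  have hc' := (hc.differentiableAt two_ne_zero).hasFDerivAt
  have hL' : fderiv ℝ L 0 = 0 :=
    hKKT ▸ ((hf.differentiableAt two_ne_zero).hasFDerivAt.add (p.hasFDerivAt.comp 0 hc')).fderiv
  obtain ⟨η, hη, hcone⟩ :=
    ContinuousLinearMap.exists_pos_coercive_near_of_coercive_on hα hell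
  have hmin : ∀ᶠ x in 𝓝 0, x ∈ {x | c x = 0} → x ≠ 0 → L 0 < L x := by
    refine hL.eventually_lt_of_coercive hL' (half_pos hα) ?_
    filter_upwards [hc'.eventually_exists_mem_ker_norm_sub_le hsurj hη] with x hx hcx
    obtain ⟨k, hk, hxk⟩ := hx (hcx.trans hc0.symm)
    simpa using hcone x k hk (by simpa using hxk)
  obtain ⟨W, hW, hWmin⟩ := hmin.exists_mem
  exact ⟨W, hW, fun x hx hcx hx0 => by simpa [L, hcx, hc0] using hWmin x hx hcx hx0⟩

/-- Second order sufficient optimality condition: a KKT point with Lagrangian Hessian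
elliptic on the kernel of the constraint derivative is a strict local minimizer on the
feasible set, provided the feasible set is locally parametrized over the kernel. -/
theorem stmt8
    {X : Type*} [NormedAddCommGroup X] [InnerProductSpace ℝ X] [CompleteSpace X]
    {Y : Type*} [NormedAddCommGroup Y] [InnerProductSpace ℝ Y] [CompleteSpace Y]
    (f : X → ℝ) (c : X → Y) (p : Y →L[ℝ] ℝ) (φ : X → X) (α : ℝ)
    (hf : ContDiffAt ℝ 2 f 0) (hc : ContDiffAt ℝ 2 c 0) (hc0 : c 0 = 0)
    (hsurj : Function.Surjective (fderiv ℝ c 0))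
    (hKKT : fderiv ℝ f 0 + p.comp (fderiv ℝ c 0) = 0)
    (hα : 0 < α)
    (hell : ∀ v ∈ LinearMap.ker (fderiv ℝ c 0 : X →ₗ[ℝ] Y),
      α * ‖v‖ ^ 2 ≤ fderiv ℝ (fderiv ℝ (fun x => f x + p (c x))) 0 v v)
    (hφ : ContDiffAt ℝ 2 φ 0) (hφ0 : φ 0 = 0)
    (hφ' : fderiv ℝ φ 0 = ContinuousLinearMap.id ℝ X)
    (hfeas : ∃ U ∈ 𝓝 (0 : X), ∃ V ∈ 𝓝 (0 : X),
      {x ∈ U | c x = 0} = φ '' (V ∩ (LinearMap.ker (fderiv ℝ c 0 : X →ₗ[ℝ] Y) : Set X))) :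
    ∃ W ∈ 𝓝 (0 : X), ∀ x ∈ W, c x = 0 → x ≠ 0 → f 0 < f x :=
  stmt8_general f c p α hf hc hc0 hsurj hKKT hα hell
end

section
/- Let X, Y be real Hilbert spaces, A : X → Y bounded linear surjective with minimum-norm right inverse A⁻, and let x* ∈ X and c : X → Y be C¹ on a ball containing the segment [0, x*] with c(x*) = 0 and c'(0) = A. Assume ‖A⁻(c'(δx) − A)v‖ ≤ ω‖δx‖‖v‖ for all δx on the segment and all v ∈ X. Then n* := A⁻( A(0 − x*) − (c(0) − c(x*)) ) satisfies ‖n*‖ ≤ (ω/2)‖x*‖². -/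
/-- Estimate for the normal component of the Newton error:
‖A⁻(A(0 - x*) - (c(0) - c(x*)))‖ ≤ (ω/2)‖x*‖² under the affine covariant
Lipschitz condition along the segment [0, x*]. -/
theorem stmt18
    {X : Type*} [NormedAddCommGroup X] [InnerProductSpace ℝ X] [CompleteSpace X]
    {Y : Type*} [NormedAddCommGroup Y] [InnerProductSpace ℝ Y] [CompleteSpace Y]
    (A : X →L[ℝ] Y) (hA : Function.Surjective A)
    (B : Y →L[ℝ] X) (hB1 : ∀ y : Y, A (B y) = y)
    (hB2 : ∀ y : Y, B y ∈ (LinearMap.ker (A : X →ₗ[ℝ] Y))ᗮ)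
    (c : X → Y) (xs : X) (ρ ω : ℝ) (hω : 0 ≤ ω)
    (hseg : segment ℝ (0 : X) xs ⊆ Metric.ball (0 : X) ρ)
    (hc : ContDiffOn ℝ 1 c (Metric.ball (0 : X) ρ))
    (hA0 : fderiv ℝ c 0 = A) (hcxs : c xs = 0)
    (hlip : ∀ δx ∈ segment ℝ (0 : X) xs, ∀ v : X,
      ‖B (fderiv ℝ c δx v - A v)‖ ≤ ω * ‖δx‖ * ‖v‖) :
    ‖B (A (0 - xs) - (c 0 - c xs))‖ ≤ ω / 2 * ‖xs‖ ^ 2 := by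
  have hmem : ∀ t ∈ Set.Icc (0:ℝ) 1, t • xs ∈ segment ℝ (0:X) xs := by
    intro t ht
    exact ⟨1 - t, t, by linarith [ht.2], ht.1, by linarith, by simp⟩
  have hball : ∀ t ∈ Set.Icc (0:ℝ) 1, t • xs ∈ Metric.ball (0:X) ρ :=
    fun t ht => hseg (hmem t ht)
  have hdiff : ∀ t ∈ Set.Icc (0:ℝ) 1, DifferentiableAt ℝ c (t • xs) := by
    intro t ht
    exact (hc.differentiableOn one_ne_zero).differentiableAt
      (Metric.isOpen_ball.mem_nhds (hball t ht))
  have hderiv : ∀ t ∈ Set.uIcc (0:ℝ) 1,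
      HasDerivAt (fun s : ℝ => c (s • xs)) ((fderiv ℝ c (t • xs)) xs) t := by
    intro t ht
    rw [Set.uIcc_of_le zero_le_one] at ht
    have h1 : HasDerivAt (fun s : ℝ => s • xs) xs t := by
      simpa using (hasDerivAt_id t).smul_const xs
    exact ((hdiff t ht).hasFDerivAt).comp_hasDerivAt t h1
  have hcont : ContinuousOn (fun t : ℝ => (fderiv ℝ c (t • xs)) xs) (Set.Icc 0 1) := by
    have h1 : ContinuousOn (fderiv ℝ c) (Metric.ball (0:X) ρ) :=
      hc.continuousOn_fderiv_of_isOpen Metric.isOpen_ball le_rfl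
    have h2 : ContinuousOn (fun t : ℝ => t • xs) (Set.Icc 0 1) :=
      (continuous_id.smul continuous_const).continuousOn
    exact (h1.comp h2 (fun t ht => hball t ht)).clm_apply continuousOn_const
  have hint : IntervalIntegrable (fun t : ℝ => (fderiv ℝ c (t • xs)) xs)
      MeasureTheory.volume 0 1 := hcont.intervalIntegrable_of_Icc zero_le_one
  have hftc : ∫ t in (0:ℝ)..1, (fderiv ℝ c (t • xs)) xs = c xs - c 0 := by
    have := intervalIntegral.integral_eq_sub_of_hasDerivAt hderiv hint
    simpa using this
  have hint2 : IntervalIntegrable (fun t : ℝ => (fderiv ℝ c (t • xs)) xs - A xs)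
      MeasureTheory.volume 0 1 := hint.sub intervalIntegrable_const
  have key : A (0 - xs) - (c 0 - c xs)
      = ∫ t in (0:ℝ)..1, ((fderiv ℝ c (t • xs)) xs - A xs) := by
    rw [intervalIntegral.integral_sub hint intervalIntegrable_const, hftc,
      intervalIntegral.integral_const]
    simp
    abel
  have hBcomm : B (∫ t in (0:ℝ)..1, ((fderiv ℝ c (t • xs)) xs - A xs))
      = ∫ t in (0:ℝ)..1, B ((fderiv ℝ c (t • xs)) xs - A xs) :=
    (B.intervalIntegral_comp_comm hint2).symm
  rw [key, hBcomm]
  have hbound : ∀ t ∈ Set.Icc (0:ℝ) 1,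
      ‖B ((fderiv ℝ c (t • xs)) xs - A xs)‖ ≤ (ω * ‖xs‖ * ‖xs‖) * t := by
    intro t ht
    have := hlip (t • xs) (hmem t ht) xs
    calc ‖B ((fderiv ℝ c (t • xs)) xs - A xs)‖ ≤ ω * ‖t • xs‖ * ‖xs‖ := this
      _ = (ω * ‖xs‖ * ‖xs‖) * t := by
          rw [norm_smul, Real.norm_eq_abs, abs_of_nonneg ht.1]; ring
  have hgint : IntervalIntegrable (fun t : ℝ => (ω * ‖xs‖ * ‖xs‖) * t)
      MeasureTheory.volume 0 1 := (continuous_const.mul continuous_id).intervalIntegrable 0 1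
  have hcontB : ContinuousOn (fun t : ℝ => ‖B ((fderiv ℝ c (t • xs)) xs - A xs)‖)
      (Set.Icc 0 1) :=
    (B.continuous.comp_continuousOn (hcont.sub continuousOn_const)).norm
  have hintB : IntervalIntegrable (fun t : ℝ => ‖B ((fderiv ℝ c (t • xs)) xs - A xs)‖)
      MeasureTheory.volume 0 1 := hcontB.intervalIntegrable_of_Icc zero_le_one
  have hle : ‖∫ t in (0:ℝ)..1, B ((fderiv ℝ c (t • xs)) xs - A xs)‖
      ≤ ∫ t in (0:ℝ)..1, (ω * ‖xs‖ * ‖xs‖) * t := by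
    refine (intervalIntegral.norm_integral_le_integral_norm zero_le_one).trans ?_
    exact intervalIntegral.integral_mono_on zero_le_one hintB hgint hbound
  refine hle.trans ?_
  rw [intervalIntegral.integral_const_mul, integral_id]
  nlinarith [norm_nonneg xs]
end
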